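/- arXiv:2004.08244 — 3 statements merged into one kernel-verified Lean document; each statement's English description precedes it below -/
import Mathlib

section
/- Let ℓ be a prime with ℓ ≡ 5 (mod 8) and let u, v be positive integers with u² − v²ℓ = −4. Then the Legendre symbol (2u/ℓ) equals −1. -/
/-!
Modulo `ℓ` the equation reads `u² = -4`, and then `u = (1 + u/2)²` is a square. Hence
`(2u/ℓ) = (2/ℓ) (u/ℓ) = (2/ℓ)`, which is `-1` because `ℓ ≡ 5 (mod 8)`.
-/

theorem isSquare_of_sq_eq_neg_four {F : Type*} [Field F] {u : F} (hu : u ^ 2 = -4) :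
    IsSquare u := by
  by_cases h2 : (2 : F) = 0
  · have hu0 : u = 0 := pow_eq_zero_iff (n := 2) two_ne_zero |>.mp <| by
      linear_combination hu - 2 * h2
    exact ⟨0, by simp [hu0]⟩
  · exact ⟨1 + u / 2, by field_simp; linear_combination -hu⟩

theorem legendreSym_eq_one_of_sq_eq_neg_four (p : ℕ) [Fact p.Prime] (hp : p ≠ 2) {u : ℤ}
    (hu : (u : ZMod p) ^ 2 = -4) : legendreSym p u = 1 := by
  have hu0 : (u : ZMod p) ≠ 0 := by
    intro h0
    have h4 : p ∣ 2 ^ 2 :=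
      (ZMod.natCast_eq_zero_iff _ _).mp (by push_cast; linear_combination hu - (u : ZMod p) * h0)
    exact hp <| (Nat.prime_dvd_prime_iff_eq Fact.out Nat.prime_two).mp <|
      (Fact.out : p.Prime).dvd_of_dvd_pow h4
  exact (legendreSym.eq_one_iff p hu0).mpr (isSquare_of_sq_eq_neg_four hu)

theorem legendreSym_two_mul_u_general (ℓ : ℕ) [Fact ℓ.Prime] (hℓ5 : ℓ % 8 = 5)
    (u v : ℤ) (h : u ^ 2 - v ^ 2 * (ℓ : ℤ) = -4) :
    legendreSym ℓ (2 * u) = -1 := by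
  have hℓ2 : ℓ ≠ 2 := by omega
  have hu : (u : ZMod ℓ) ^ 2 = -4 := by
    have := congrArg (Int.cast : ℤ → ZMod ℓ) h
    push_cast [ZMod.natCast_self] at this
    linear_combination this
  have htwo : legendreSym ℓ 2 = -1 := by
    rw [legendreSym.at_two hℓ2, ZMod.χ₈_nat_eq_if_mod_eight]
    simp [hℓ5, show ℓ % 2 = 1 by omega]
  rw [legendreSym.mul, htwo, legendreSym_eq_one_of_sq_eq_neg_four ℓ hℓ2 hu]
  norm_num

/-- If `ℓ ≡ 5 (mod 8)` is prime and `u, v > 0` satisfy `u² − v²ℓ = −4`,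
then the Legendre symbol `(2u/ℓ)` equals `−1`. -/
theorem legendreSym_two_mul_u (ℓ : ℕ) [Fact ℓ.Prime] (hℓ5 : ℓ % 8 = 5)
    (u v : ℤ) (hu : 0 < u) (hv : 0 < v) (h : u ^ 2 - v ^ 2 * (ℓ : ℤ) = -4) :
    legendreSym ℓ (2 * u) = -1 :=
  legendreSym_two_mul_u_general ℓ hℓ5 u v h
end

section
/- Let ℓ = b² + c² be a squarefree positive integer with a, c odd positive integers and b positive, gcd(a, ℓ) = 1. Then ℚ(√(2a(ℓ + b√ℓ))) = ℚ(√(a(ℓ + c√ℓ))) as subfields of ℝ. -/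
open IntermediateField

/-!
Write `s = √ℓ`, `x = √(2a(ℓ + b s))` and `y = √(a(ℓ + c s))`. Since `ℓ = b² + c²`,
`(xy)² = 2a²ℓ(ℓ + bc + (b + c)s) = (a(ℓ + (b + c)s))²`, so `xy = a(ℓ + (b + c)s)`.
Squaring recovers `s` from either of `x`, `y`; hence `y = a(ℓ + (b + c)s)/x ∈ ℚ(x)`
and symmetrically `x ∈ ℚ(y)`.
-/

namespace IntermediateField

variable {F E : Type*} [Field F] [Field E] [Algebra F E]

theorem mem_adjoin_simple_of_sq_eq {x s : E} {p q : F} (hq : q ≠ 0)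
    (h : x ^ 2 = algebraMap F E p + algebraMap F E q * s) : s ∈ F⟮x⟯ := by
  have hq' : algebraMap F E q ≠ 0 := (map_ne_zero _).2 hq
  rw [show s = (x ^ 2 - algebraMap F E p) / algebraMap F E q by rw [h]; field_simp; ring]
  exact div_mem (sub_mem (pow_mem (mem_adjoin_simple_self F x) 2) (F⟮x⟯.algebraMap_mem p))
    (F⟮x⟯.algebraMap_mem q)

theorem mem_adjoin_simple_of_mul_eq {x y s : E} {p q : F} (hx : x ≠ 0) (hs : s ∈ F⟮x⟯)
    (h : x * y = algebraMap F E p + algebraMap F E q * s) : y ∈ F⟮x⟯ := by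
  rw [show y = (algebraMap F E p + algebraMap F E q * s) / x by rw [← h]; field_simp]
  exact div_mem (add_mem (F⟮x⟯.algebraMap_mem p) (mul_mem (F⟮x⟯.algebraMap_mem q) hs))
    (mem_adjoin_simple_self F x)

theorem adjoin_simple_eq_of_mul_eq {x y s : E} {p q : F} (hx : x ≠ 0) (hy : y ≠ 0)
    (hsx : s ∈ F⟮x⟯) (hsy : s ∈ F⟮y⟯)
    (h : x * y = algebraMap F E p + algebraMap F E q * s) : F⟮x⟯ = F⟮y⟯ :=
  le_antisymm
    (adjoin_simple_le_iff.2 <| mem_adjoin_simple_of_mul_eq hy hsy (by rwa [mul_comm]))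
    (adjoin_simple_le_iff.2 <| mem_adjoin_simple_of_mul_eq hx hsx h)

end IntermediateField

theorem Real.sqrt_mul_sqrt_of_eq_sq_add_sq {a b c ℓ : ℝ} (ha : 0 ≤ a) (hb : 0 ≤ b)
    (hc : 0 ≤ c) (hℓ : ℓ = b ^ 2 + c ^ 2) :
    √(2 * a * (ℓ + b * √ℓ)) * √(a * (ℓ + c * √ℓ)) = a * (ℓ + (b + c) * √ℓ) := by
  have hℓ0 : 0 ≤ ℓ := by rw [hℓ]; positivity
  have hs : √ℓ ^ 2 = ℓ := Real.sq_sqrt hℓ0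
  rw [← Real.sqrt_mul (by positivity), Real.sqrt_eq_iff_mul_self_eq (by positivity)
    (by positivity)]
  linear_combination (-a ^ 2 * (b ^ 2 + c ^ 2)) * hs + a ^ 2 * ℓ * hℓ

theorem adjoin_sqrt_eq_general (a b c ℓ : ℕ) (ha : 0 < a) (hb : 0 < b) (hc : 0 < c)
    (hℓ : ℓ = b ^ 2 + c ^ 2) :
    IntermediateField.adjoin ℚ
        {Real.sqrt (2 * (a : ℝ) * ((ℓ : ℝ) + (b : ℝ) * Real.sqrt ℓ))} =
      IntermediateField.adjoin ℚ
        {Real.sqrt ((a : ℝ) * ((ℓ : ℝ) + (c : ℝ) * Real.sqrt ℓ))} := by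
  have hℓ' : (ℓ : ℝ) = b ^ 2 + c ^ 2 := by exact_mod_cast hℓ
  have hℓ0 : (0 : ℝ) < ℓ := by rw [hℓ']; positivity
  have hx : 0 < 2 * (a : ℝ) * (ℓ + b * √ℓ) := by positivity
  have hy : 0 < (a : ℝ) * (ℓ + c * √ℓ) := by positivity
  refine adjoin_simple_eq_of_mul_eq (p := (a * ℓ : ℚ)) (q := (a * (b + c) : ℚ)) (s := √ℓ)
    (Real.sqrt_ne_zero'.2 hx) (Real.sqrt_ne_zero'.2 hy) ?_ ?_ ?_
  · refine mem_adjoin_simple_of_sq_eq (p := (2 * a * ℓ : ℚ)) (q := (2 * a * b : ℚ))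
      (by positivity) ?_
    rw [Real.sq_sqrt hx.le]; simp only [map_mul, map_ofNat, map_natCast]; ring
  · refine mem_adjoin_simple_of_sq_eq (p := (a * ℓ : ℚ)) (q := (a * c : ℚ)) (by positivity) ?_
    rw [Real.sq_sqrt hy.le]; simp only [map_mul, map_natCast]; ring
  · rw [Real.sqrt_mul_sqrt_of_eq_sq_add_sq (by positivity) (by positivity) (by positivity) hℓ']
    simp only [map_add, map_mul, map_natCast]; ring

/-- If `ℓ = b² + c²` is squarefree with `a, c` odd positive and `b` positive,
`gcd(a, ℓ) = 1`, then `ℚ(√(2a(ℓ + b√ℓ))) = ℚ(√(a(ℓ + c√ℓ)))` inside `ℝ`. -/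
theorem adjoin_sqrt_eq (a b c ℓ : ℕ) (ha : 0 < a) (hb : 0 < b) (hc : 0 < c)
    (haodd : Odd a) (hcodd : Odd c) (hℓ : ℓ = b ^ 2 + c ^ 2) (hsf : Squarefree ℓ)
    (hcop : Nat.Coprime a ℓ) :
    IntermediateField.adjoin ℚ
        {Real.sqrt (2 * (a : ℝ) * ((ℓ : ℝ) + (b : ℝ) * Real.sqrt ℓ))} =
      IntermediateField.adjoin ℚ
        {Real.sqrt ((a : ℝ) * ((ℓ : ℝ) + (c : ℝ) * Real.sqrt ℓ))} :=
  adjoin_sqrt_eq_general a b c ℓ ha hb hc hℓ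
end

section
/- Let ℓ ≡ 5 (mod 8) be prime and p ≡ 1 (mod 4) a prime with (p/ℓ) = 1. Write p^h = a² − b²ℓ for integers a, b (where h is the odd class number of ℚ(√ℓ) and (a + b√ℓ) generates a prime above p). Then the Legendre symbol (b/p) equals (ℓ/p)₄ · (a/p), where (ℓ/p)₄ is the rational fourth power residue symbol. -/
open NumberField

/- Reducing `p^h = a² − ℓb²` modulo `p` gives `a² = ℓb²`, and Euler's criterion turns `(ℓ/p) = 1`
into `ℓ^((p−1)/2) = 1`. With `p − 1 = 4k` this yields
`b^(2k) = (bℓ)^(2k) = (b²ℓ²)^k = (ℓa²)^k = ℓ^k a^(2k)`, i.e. `(b/p) = (bℓ/p) = (ℓa²/p)₄ = (ℓ/p)₄ (a/p)`. -/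

theorem pow_two_mul_eq_pow_mul_pow_two_mul_of_sq_eq_mul_sq {M : Type*} [CommMonoid M]
    {a b l : M} (k : ℕ) (hl : l ^ (2 * k) = 1) (hab : a ^ 2 = l * b ^ 2) :
    b ^ (2 * k) = l ^ k * a ^ (2 * k) :=
  calc b ^ (2 * k) = l ^ (2 * k) * b ^ (2 * k) := by rw [hl, one_mul]
    _ = l ^ k * (l * b ^ 2) ^ k := by rw [mul_pow, ← mul_assoc, ← pow_add, ← pow_mul, two_mul]
    _ = l ^ k * a ^ (2 * k) := by rw [← hab, ← pow_mul]

theorem ZMod.sq_eq_mul_sq_of_pow_eq_sq_sub_mul_sq {p h : ℕ} (hh : h ≠ 0) {a b l : ℤ}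
    (hsol : (p : ℤ) ^ h = a ^ 2 - l * b ^ 2) :
    (a : ZMod p) ^ 2 = l * (b : ZMod p) ^ 2 := by
  have hmod := congrArg (Int.cast : ℤ → ZMod p) hsol
  push_cast at hmod
  rw [ZMod.natCast_self, zero_pow hh] at hmod
  linear_combination -hmod

theorem ZMod.pow_div_two_eq_one_of_legendreSym_eq_one (p : ℕ) [Fact p.Prime] {a : ℤ}
    (ha : legendreSym p a = 1) : (a : ZMod p) ^ (p / 2) = 1 := by
  rw [← legendreSym.eq_pow, ha, Int.cast_one]

theorem legendre_b_eq_fourth_symbol_general (ℓ p : ℕ) [Fact p.Prime]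
    (hp1 : p % 4 = 1)
    (hQR : legendreSym p ℓ = 1)
    (a b : ℤ) (h : ℕ) (hodd : Odd h) (hsol : (p : ℤ) ^ h = a ^ 2 - (ℓ : ℤ) * b ^ 2) :
    (b : ZMod p) ^ ((p - 1) / 2) =
      (ℓ : ZMod p) ^ ((p - 1) / 4) * (a : ZMod p) ^ ((p - 1) / 2) := by
  have hsq := ZMod.sq_eq_mul_sq_of_pow_eq_sq_sub_mul_sq hodd.pos.ne' hsol
  have heuler := ZMod.pow_div_two_eq_one_of_legendreSym_eq_one p hQR
  rw [Int.cast_natCast] at hsq heuler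
  rw [show p / 2 = 2 * ((p - 1) / 4) by omega] at heuler
  rw [show (p - 1) / 2 = 2 * ((p - 1) / 4) by omega]
  exact pow_two_mul_eq_pow_mul_pow_two_mul_of_sq_eq_mul_sq _ heuler hsq

/-- For `ℓ ≡ 5 (mod 8)` prime and `p ≡ 1 (mod 4)` prime with `(p/ℓ) = (ℓ/p) = 1`, if
`p^h = a² − ℓb²` with `h` odd and `p ∤ a`, `p ∤ b`, then `(b/p) = (ℓ/p)₄ (a/p)`, expressed
via Euler's criterion: `b^((p−1)/2) = ℓ^((p−1)/4) · a^((p−1)/2)` in `ZMod p`. -/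
theorem legendre_b_eq_fourth_symbol (ℓ p : ℕ) [Fact ℓ.Prime] [Fact p.Prime]
    (hℓ5 : ℓ % 8 = 5) (hp1 : p % 4 = 1)
    (hQR : legendreSym p ℓ = 1) (hQR' : legendreSym ℓ p = 1)
    (a b : ℤ) (h : ℕ) (hodd : Odd h) (hsol : (p : ℤ) ^ h = a ^ 2 - (ℓ : ℤ) * b ^ 2)
    (hpa : ¬ (p : ℤ) ∣ a) (hpb : ¬ (p : ℤ) ∣ b) :
    (b : ZMod p) ^ ((p - 1) / 2) =
      (ℓ : ZMod p) ^ ((p - 1) / 4) * (a : ZMod p) ^ ((p - 1) / 2) :=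
  legendre_b_eq_fourth_symbol_general ℓ p hp1 hQR a b h hodd hsol
end
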